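/- arXiv:2110.05998 — 12 statements merged into one kernel-verified Lean document; each statement's English description precedes it below -/
import Mathlib

section
/- Let D be a set and P13 : D³ → D³ the permutation map P13(a₁,a₂,a₃) = (a₃,a₂,a₁). If a map T : D³ → D³ satisfies the tetrahedron equation, then the map T̃ = P13 ∘ T ∘ P13 also satisfies the tetrahedron equation. -/
/-- `T` acting on factors 1,2,3 of the sixfold Cartesian product `D⁶`. -/
def tetra123 {D : Type*} (T : D × D × D → D × D × D) :
    D × D × D × D × D × D → D × D × D × D × D × D :=
  fun q =>
    match q with
    | (x, y, z, r, s, t) =>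
      ((T (x, y, z)).1, (T (x, y, z)).2.1, (T (x, y, z)).2.2, r, s, t)

/-- `T` acting on factors 1,4,5 of the sixfold Cartesian product `D⁶`. -/
def tetra145 {D : Type*} (T : D × D × D → D × D × D) :
    D × D × D × D × D × D → D × D × D × D × D × D :=
  fun q =>
    match q with
    | (x, y, z, r, s, t) =>
      ((T (x, r, s)).1, y, z, (T (x, r, s)).2.1, (T (x, r, s)).2.2, t)

/-- `T` acting on factors 2,4,6 of the sixfold Cartesian product `D⁶`. -/
def tetra246 {D : Type*} (T : D × D × D → D × D × D) :
    D × D × D × D × D × D → D × D × D × D × D × D :=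
  fun q =>
    match q with
    | (x, y, z, r, s, t) =>
      (x, (T (y, r, t)).1, z, (T (y, r, t)).2.1, s, (T (y, r, t)).2.2)

/-- `T` acting on factors 3,5,6 of the sixfold Cartesian product `D⁶`. -/
def tetra356 {D : Type*} (T : D × D × D → D × D × D) :
    D × D × D × D × D × D → D × D × D × D × D × D :=
  fun q =>
    match q with
    | (x, y, z, r, s, t) =>
      (x, y, (T (z, s, t)).1, r, (T (z, s, t)).2.1, (T (z, s, t)).2.2)

/-- The (Zamolodchikov) tetrahedron equation for a map `T : D³ → D³`. -/
def IsTetrahedronMap {D : Type*} (T : D × D × D → D × D × D) : Prop :=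
  tetra123 T ∘ tetra145 T ∘ tetra246 T ∘ tetra356 T =
    tetra356 T ∘ tetra246 T ∘ tetra145 T ∘ tetra123 T

/-- The permutation map `P13(a₁,a₂,a₃) = (a₃,a₂,a₁)`. -/
def permute13 {D : Type*} : D × D × D → D × D × D :=
  fun q => (q.2.2, q.2.1, q.1)

/-! Conjugation by the involution of `D⁶` swapping factors 1 ↔ 6 and 2 ↔ 5 sends
`T̃^{123}, T̃^{145}, T̃^{246}, T̃^{356}` to `T^{356}, T^{246}, T^{145}, T^{123}`, so it carries the
tetrahedron equation of `T̃ = P13 ∘ T ∘ P13` to the tetrahedron equation of `T` with its two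
sides exchanged. -/

def permute16_25 {D : Type*} : D × D × D × D × D × D → D × D × D × D × D × D :=
  fun q => match q with | (x, y, z, r, s, t) => (t, s, z, r, y, x)

section ConjugateByPermute16_25

variable {D : Type*} (T : D × D × D → D × D × D)

theorem permute16_25_comp_permute16_25_comp {α : Type*} (f : α → D × D × D × D × D × D) :
    permute16_25 ∘ permute16_25 ∘ f = f := rfl

theorem tetra123_permute13_conj :
    tetra123 (permute13 ∘ T ∘ permute13) = permute16_25 ∘ tetra356 T ∘ permute16_25 := rfl

theorem tetra145_permute13_conj :
    tetra145 (permute13 ∘ T ∘ permute13) = permute16_25 ∘ tetra246 T ∘ permute16_25 := rfl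

theorem tetra246_permute13_conj :
    tetra246 (permute13 ∘ T ∘ permute13) = permute16_25 ∘ tetra145 T ∘ permute16_25 := rfl

theorem tetra356_permute13_conj :
    tetra356 (permute13 ∘ T ∘ permute13) = permute16_25 ∘ tetra123 T ∘ permute16_25 := rfl

end ConjugateByPermute16_25

theorem stmt_0 {D : Type*} (T : D × D × D → D × D × D) (hT : IsTetrahedronMap T) :
    IsTetrahedronMap (permute13 ∘ T ∘ permute13) := by
  unfold IsTetrahedronMap
  simp only [tetra123_permute13_conj, tetra145_permute13_conj, tetra246_permute13_conj,
    tetra356_permute13_conj, Function.comp_assoc, permute16_25_comp_permute16_25_comp]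
  exact congrArg (fun f => permute16_25 ∘ f ∘ permute16_25) hT.symm
end

section
/- Let D be a set, T : D³ → D³ a tetrahedron map, and σ : D → D a map with σ ∘ σ = id_D and (σ×σ×σ) ∘ T ∘ (σ×σ×σ) = T. Then the maps T̃ = (σ×id_D×σ) ∘ T ∘ (id_D×σ×id_D) and T̂ = (id_D×σ×id_D) ∘ T ∘ (σ×id_D×σ) are tetrahedron maps. -/
/-!
Since `σ` is an involution and `σ × σ × σ` commutes with `T`, the two gauged maps coincide:
`(σ × id × σ) ∘ T ∘ (id × σ × id) = (id × σ × id) ∘ (σ × σ × σ) ∘ T ∘ (id × σ × id)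
  = (id × σ × id) ∘ T ∘ (σ × id × σ)`.
For `T̃`, conjugating both sides of the tetrahedron equation for `T` by `σ` on the factors 2 and 5
of `D⁶` gives the two sides of the equation for `T̃`: the `σ`s that `T̃` inserts between
consecutive factors either cancel in pairs or pass through `T` by `σ × σ × σ`-invariance.
-/

section Gauge

variable {D : Type*} {T : D × D × D → D × D × D} {σ : D → D}

-- `σᵢⱼ…` applies `σ` to the factors `i, j, …` and the identity to the others.
local notation "σ³" => Prod.map σ (Prod.map σ σ)
local notation "σ₁₃" => Prod.map σ (Prod.map id σ)
local notation "σ₂" => Prod.map id (Prod.map σ id)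
local notation "σ₂₅" => Prod.map id (Prod.map σ (Prod.map id (Prod.map id (Prod.map σ id))))

theorem commute_of_comp_comp_eq (hσ : Function.Involutive σ) (hsym : σ³ ∘ T ∘ σ³ = T) :
    Function.Commute T σ³ := fun q =>
  calc T (σ³ q) = (σ³ ∘ T ∘ σ³) (σ³ q) := by rw [hsym]
    _ = σ³ (T q) := by rw [Function.comp_apply, Function.comp_apply, (hσ.prodMap (hσ.prodMap hσ)) q]

theorem comp_prodMap_outer_eq_comp_prodMap_middle (hσ : Function.Involutive σ)
    (hT : Function.Commute T σ³) :
    σ₁₃ ∘ T ∘ σ₂ = σ₂ ∘ T ∘ σ₁₃ := by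
  have h₁₃ : σ₁₃ = σ₂ ∘ σ³ := by
    simp only [Prod.map_comp_map, hσ.comp_self, Function.id_comp]
  have h₁₃' : σ³ ∘ σ₂ = σ₁₃ := by
    simp only [Prod.map_comp_map, hσ.comp_self, Function.comp_id]
  calc σ₁₃ ∘ T ∘ σ₂ = σ₂ ∘ (σ³ ∘ T) ∘ σ₂ := by rw [h₁₃]; rfl
    _ = σ₂ ∘ (T ∘ σ³) ∘ σ₂ := by rw [hT.comp_eq]
    _ = σ₂ ∘ T ∘ σ₁₃ := by rw [← h₁₃']; rfl

theorem apply_fst_of_commute (hT : Function.Commute T σ³) (a b c : D) :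
    σ (T (a, b, c)).1 = (T (σ a, σ b, σ c)).1 :=
  congrArg (·.1) (hT (a, b, c)).symm

theorem apply_snd_fst_of_commute (hT : Function.Commute T σ³) (a b c : D) :
    σ (T (a, b, c)).2.1 = (T (σ a, σ b, σ c)).2.1 :=
  congrArg (·.2.1) (hT (a, b, c)).symm

theorem apply_snd_snd_of_commute (hT : Function.Commute T σ³) (a b c : D) :
    σ (T (a, b, c)).2.2 = (T (σ a, σ b, σ c)).2.2 :=
  congrArg (·.2.2) (hT (a, b, c)).symm

theorem tetra_lhs_gauge (hσ : Function.Involutive σ) (hT : Function.Commute T σ³) :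
    tetra123 (σ₁₃ ∘ T ∘ σ₂) ∘ tetra145 (σ₁₃ ∘ T ∘ σ₂) ∘ tetra246 (σ₁₃ ∘ T ∘ σ₂) ∘
        tetra356 (σ₁₃ ∘ T ∘ σ₂) =
      σ₂₅ ∘ (tetra123 T ∘ tetra145 T ∘ tetra246 T ∘ tetra356 T) ∘ σ₂₅ := by
  funext ⟨x, y, z, r, s, t⟩
  simp [tetra123, tetra145, tetra246, tetra356, Prod.map_apply', hσ _,
    apply_fst_of_commute hT, apply_snd_fst_of_commute hT, apply_snd_snd_of_commute hT]

theorem tetra_rhs_gauge (hσ : Function.Involutive σ) (hT : Function.Commute T σ³) :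
    tetra356 (σ₁₃ ∘ T ∘ σ₂) ∘ tetra246 (σ₁₃ ∘ T ∘ σ₂) ∘ tetra145 (σ₁₃ ∘ T ∘ σ₂) ∘
        tetra123 (σ₁₃ ∘ T ∘ σ₂) =
      σ₂₅ ∘ (tetra356 T ∘ tetra246 T ∘ tetra145 T ∘ tetra123 T) ∘ σ₂₅ := by
  funext ⟨x, y, z, r, s, t⟩
  simp [tetra123, tetra145, tetra246, tetra356, Prod.map_apply', hσ _,
    apply_fst_of_commute hT, apply_snd_fst_of_commute hT, apply_snd_snd_of_commute hT]

theorem IsTetrahedronMap.gauge (hT : IsTetrahedronMap T) (hσ : Function.Involutive σ)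
    (hcomm : Function.Commute T σ³) :
    IsTetrahedronMap (σ₁₃ ∘ T ∘ σ₂) := by
  rw [IsTetrahedronMap, tetra_lhs_gauge hσ hcomm, tetra_rhs_gauge hσ hcomm, hT]

end Gauge

theorem stmt_1 {D : Type*} (T : D × D × D → D × D × D) (σ : D → D)
    (hT : IsTetrahedronMap T)
    (hinv : σ ∘ σ = id)
    (hsym : (fun q : D × D × D => (σ q.1, σ q.2.1, σ q.2.2)) ∘ T ∘
        (fun q : D × D × D => (σ q.1, σ q.2.1, σ q.2.2)) = T) :
    IsTetrahedronMap
      ((fun q : D × D × D => (σ q.1, q.2.1, σ q.2.2)) ∘ T ∘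
        (fun q : D × D × D => (q.1, σ q.2.1, q.2.2))) ∧
    IsTetrahedronMap
      ((fun q : D × D × D => (q.1, σ q.2.1, q.2.2)) ∘ T ∘
        (fun q : D × D × D => (σ q.1, q.2.1, σ q.2.2))) := by
  have hσ : Function.Involutive σ := congrFun hinv
  have hcomm := commute_of_comp_comp_eq hσ hsym
  have hgauge := hT.gauge hσ hcomm
  exact ⟨hgauge, comp_prodMap_outer_eq_comp_prodMap_middle hσ hcomm ▸ hgauge⟩
end

section
/- Let D be a set and Y : D² → D² a Yang–Baxter map. Then the maps Y^{12} = Y × id_D : D³ → D³ and Y^{23} = id_D × Y : D³ → D³ are tetrahedron maps. -/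
/-- `Y` acting on factors 1,2 of `D³` (i.e. `Y × id`). -/
def yb12 {D : Type*} (Y : D × D → D × D) : D × D × D → D × D × D :=
  fun q => ((Y (q.1, q.2.1)).1, (Y (q.1, q.2.1)).2, q.2.2)

/-- `Y` acting on factors 1,3 of `D³`. -/
def yb13 {D : Type*} (Y : D × D → D × D) : D × D × D → D × D × D :=
  fun q => ((Y (q.1, q.2.2)).1, q.2.1, (Y (q.1, q.2.2)).2)

/-- `Y` acting on factors 2,3 of `D³` (i.e. `id × Y`). -/
def yb23 {D : Type*} (Y : D × D → D × D) : D × D × D → D × D × D :=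
  fun q => (q.1, (Y (q.2.1, q.2.2)).1, (Y (q.2.1, q.2.2)).2)

/-- The Yang–Baxter equation for a map `Y : D² → D²`. -/
def IsYangBaxterMap {D : Type*} (Y : D × D → D × D) : Prop :=
  yb12 Y ∘ yb13 Y ∘ yb23 Y = yb23 Y ∘ yb13 Y ∘ yb12 Y

/-! For `T = Y × id`, the four maps of the tetrahedron equation act as `Y` on the factor pairs
(1,2), (1,4), (2,4) and (3,5) of `D⁶`; the last one touches factors disjoint from the others and
commutes past them, and what remains is the Yang–Baxter equation on factors 1, 2, 4. Likewise, for
`T = id × Y` the pairs are (2,3), (4,5), (4,6), (5,6), leaving the Yang–Baxter equation on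
factors 4, 5, 6. -/

section

variable {D : Type*} {Y : D × D → D × D}

theorem IsYangBaxterMap.apply (hY : IsYangBaxterMap Y) (a b c : D) :
    yb12 Y (yb13 Y (yb23 Y (a, b, c))) = yb23 Y (yb13 Y (yb12 Y (a, b, c))) :=
  congrFun hY (a, b, c)

theorem IsYangBaxterMap.isTetrahedronMap_yb12 (hY : IsYangBaxterMap Y) :
    IsTetrahedronMap (yb12 Y) := by
  funext ⟨x, y, z, r, s, t⟩
  have h := hY.apply x y r
  simp only [Function.comp, tetra123, tetra145, tetra246, tetra356, yb12, yb13, yb23,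
    Prod.mk.injEq] at h ⊢
  exact ⟨h.1, h.2.1, trivial, h.2.2, trivial⟩

theorem IsYangBaxterMap.isTetrahedronMap_yb23 (hY : IsYangBaxterMap Y) :
    IsTetrahedronMap (yb23 Y) := by
  funext ⟨x, y, z, r, s, t⟩
  have h := hY.apply r s t
  simp only [Function.comp, tetra123, tetra145, tetra246, tetra356, yb12, yb13, yb23,
    Prod.mk.injEq] at h ⊢
  exact ⟨trivial, trivial, trivial, h.1, h.2.1, h.2.2⟩

end

theorem stmt_2 {D : Type*} (Y : D × D → D × D) (hY : IsYangBaxterMap Y) :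
    IsTetrahedronMap (yb12 Y) ∧ IsTetrahedronMap (yb23 Y) :=
  ⟨hY.isTetrahedronMap_yb12, hY.isTetrahedronMap_yb23⟩
end

section
/- Let K be a field and k ∈ K. The map T : K³ → K³, T(x,y,z) = (x, ky + xz, z), satisfies the tetrahedron equation. Moreover, if k ≠ 0, then T is bijective with inverse T⁻¹(x̂,ŷ,ẑ) = (x̂, (ŷ − x̂ẑ)/k, ẑ), and T⁻¹ also satisfies the tetrahedron equation. -/
theorem stmt_4 {K : Type*} [Field K] (k : K) :
    IsTetrahedronMap (fun p : K × K × K => (p.1, k * p.2.1 + p.1 * p.2.2, p.2.2)) ∧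
    (k ≠ 0 →
      Function.Bijective (fun p : K × K × K => (p.1, k * p.2.1 + p.1 * p.2.2, p.2.2)) ∧
      Function.LeftInverse (fun p : K × K × K => (p.1, (p.2.1 - p.1 * p.2.2) / k, p.2.2))
        (fun p : K × K × K => (p.1, k * p.2.1 + p.1 * p.2.2, p.2.2)) ∧
      Function.RightInverse (fun p : K × K × K => (p.1, (p.2.1 - p.1 * p.2.2) / k, p.2.2))
        (fun p : K × K × K => (p.1, k * p.2.1 + p.1 * p.2.2, p.2.2)) ∧
      IsTetrahedronMap (fun p : K × K × K => (p.1, (p.2.1 - p.1 * p.2.2) / k, p.2.2))) := by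
  have hli : ∀ hk : k ≠ 0, Function.LeftInverse
      (fun p : K × K × K => (p.1, (p.2.1 - p.1 * p.2.2) / k, p.2.2))
      (fun p : K × K × K => (p.1, k * p.2.1 + p.1 * p.2.2, p.2.2)) := by
    intro hk ⟨x, y, z⟩
    simp only [Prod.mk.injEq]
    field_simp
    simp
  have hri : ∀ hk : k ≠ 0, Function.RightInverse
      (fun p : K × K × K => (p.1, (p.2.1 - p.1 * p.2.2) / k, p.2.2))
      (fun p : K × K × K => (p.1, k * p.2.1 + p.1 * p.2.2, p.2.2)) := by
    intro hk ⟨x, y, z⟩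
    simp only [Prod.mk.injEq]
    field_simp
    simp
  refine ⟨?_, fun hk => ⟨⟨(hli hk).injective, (hri hk).surjective⟩, hli hk, hri hk, ?_⟩⟩
  · funext ⟨x, y, z, r, s, t⟩
    simp only [Function.comp, tetra123, tetra145, tetra246, tetra356, Prod.mk.injEq]
    and_intros <;> (try ring) <;> trivial
  · funext ⟨x, y, z, r, s, t⟩
    simp only [Function.comp, tetra123, tetra145, tetra246, tetra356, Prod.mk.injEq]
    and_intros <;> (try trivial) <;> (field_simp; try ring)
end

section
/- Let A be an associative ring with a unit and K ∈ A an invertible element. Then the map T_K : A³ → A³, T_K(X,Y,Z) = (X, YK + XZ, KZK⁻¹), satisfies the tetrahedron equation; furthermore T_K is bijective, its inverse is the map (X̂,Ŷ,Ẑ) ↦ (X̂, ŶK⁻¹ − X̂K⁻¹Ẑ, K⁻¹ẐK), and this inverse map also satisfies the tetrahedron equation. -/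
/-!
Both sides of the tetrahedron equation for `T_K` send `(x, y, z, r, s, t)` to
`(x, yK + xz, KzK⁻¹, rK² + yKt + xsK + xzt, Ks + KztK⁻¹, K²tK⁻²)`; the only cancellation needed
is `K⁻¹K = 1`, so the equation holds over any semiring. The inverse map satisfies the equation
for a general reason: `T ↦ T^{ijk}` preserves inverses, and inverting both sides of the
tetrahedron equation for `T` gives the tetrahedron equation for `T⁻¹`.
-/

open Function

section Inverse

variable {D : Type*} {S T : D × D × D → D × D × D}

theorem Function.LeftInverse.tetra123 (h : LeftInverse S T) :
    LeftInverse (tetra123 S) (tetra123 T) := by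
  rintro ⟨x, y, z, r, s, t⟩
  simp [_root_.tetra123, h (x, y, z)]

theorem Function.LeftInverse.tetra145 (h : LeftInverse S T) :
    LeftInverse (tetra145 S) (tetra145 T) := by
  rintro ⟨x, y, z, r, s, t⟩
  simp [_root_.tetra145, h (x, r, s)]

theorem Function.LeftInverse.tetra246 (h : LeftInverse S T) :
    LeftInverse (tetra246 S) (tetra246 T) := by
  rintro ⟨x, y, z, r, s, t⟩
  simp [_root_.tetra246, h (y, r, t)]

theorem Function.LeftInverse.tetra356 (h : LeftInverse S T) :
    LeftInverse (tetra356 S) (tetra356 T) := by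
  rintro ⟨x, y, z, r, s, t⟩
  simp [_root_.tetra356, h (z, s, t)]

theorem IsTetrahedronMap.symm {e : D × D × D ≃ D × D × D} (he : IsTetrahedronMap e) :
    IsTetrahedronMap e.symm := by
  have hR : LeftInverse (tetra123 e.symm ∘ tetra145 e.symm ∘ tetra246 e.symm ∘ tetra356 e.symm)
      (tetra356 e ∘ tetra246 e ∘ tetra145 e ∘ tetra123 e) :=
    let h := e.left_inv
    h.tetra356.comp (h.tetra246.comp (h.tetra145.comp h.tetra123))
  have hL : RightInverse (tetra356 e.symm ∘ tetra246 e.symm ∘ tetra145 e.symm ∘ tetra123 e.symm)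
      (tetra123 e ∘ tetra145 e ∘ tetra246 e ∘ tetra356 e) :=
    let h : LeftInverse e e.symm := e.right_inv
    h.tetra356.comp (h.tetra246.comp (h.tetra145.comp h.tetra123))
  rw [← he] at hR
  exact hR.eq_rightInverse hL

end Inverse

section UnitTetrahedronMap

variable {A : Type*}

def unitTetraMap [Semiring A] (K : Aˣ) (p : A × A × A) : A × A × A :=
  (p.1, p.2.1 * K + p.1 * p.2.2, K * p.2.2 * ↑K⁻¹)

theorem isTetrahedronMap_unitTetraMap [Semiring A] (K : Aˣ) :
    IsTetrahedronMap (unitTetraMap K) := by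
  funext ⟨x, y, z, r, s, t⟩
  simp [tetra123, tetra145, tetra246, tetra356, unitTetraMap, mul_add, add_mul, mul_assoc]
  abel

def unitTetraEquiv [Ring A] (K : Aˣ) : A × A × A ≃ A × A × A where
  toFun := unitTetraMap K
  invFun p := (p.1, p.2.1 * ↑K⁻¹ - p.1 * ↑K⁻¹ * p.2.2, ↑K⁻¹ * p.2.2 * K)
  left_inv := by
    rintro ⟨x, y, z⟩
    simp [unitTetraMap, mul_assoc, add_mul]
  right_inv := by
    rintro ⟨x, y, z⟩
    simp [unitTetraMap, mul_assoc, sub_mul]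

end UnitTetrahedronMap

theorem stmt_5 {A : Type*} [Ring A] (K : Aˣ) :
    IsTetrahedronMap (fun p : A × A × A =>
      (p.1, p.2.1 * (K : A) + p.1 * p.2.2, (K : A) * p.2.2 * ((K⁻¹ : Aˣ) : A))) ∧
    Function.Bijective (fun p : A × A × A =>
      (p.1, p.2.1 * (K : A) + p.1 * p.2.2, (K : A) * p.2.2 * ((K⁻¹ : Aˣ) : A))) ∧
    Function.LeftInverse
      (fun p : A × A × A =>
        (p.1, p.2.1 * ((K⁻¹ : Aˣ) : A) - p.1 * ((K⁻¹ : Aˣ) : A) * p.2.2, ((K⁻¹ : Aˣ) : A) * p.2.2 * (K : A)))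
      (fun p : A × A × A =>
        (p.1, p.2.1 * (K : A) + p.1 * p.2.2, (K : A) * p.2.2 * ((K⁻¹ : Aˣ) : A))) ∧
    Function.RightInverse
      (fun p : A × A × A =>
        (p.1, p.2.1 * ((K⁻¹ : Aˣ) : A) - p.1 * ((K⁻¹ : Aˣ) : A) * p.2.2, ((K⁻¹ : Aˣ) : A) * p.2.2 * (K : A)))
      (fun p : A × A × A =>
        (p.1, p.2.1 * (K : A) + p.1 * p.2.2, (K : A) * p.2.2 * ((K⁻¹ : Aˣ) : A))) ∧
    IsTetrahedronMap (fun p : A × A × A =>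
      (p.1, p.2.1 * ((K⁻¹ : Aˣ) : A) - p.1 * ((K⁻¹ : Aˣ) : A) * p.2.2, ((K⁻¹ : Aˣ) : A) * p.2.2 * (K : A))) := by
  set e := unitTetraEquiv K
  have he : IsTetrahedronMap e := isTetrahedronMap_unitTetraMap K
  exact ⟨he, e.bijective, e.left_inv, e.right_inv, he.symm⟩
end

section
/- Let K be a field and n, m positive integers with 1 ≤ m ≤ n. Let Mat_n(K) denote the n×n matrices over K, and for X, Z ∈ Mat_n(K) write x_{k,l}, z_{k,l} for their entries. Then the map T_{n,m} : (Mat_n(K))³ → (Mat_n(K))³ sending (X, Y, Z) to (X, Ŷ, Z), where Ŷ is the matrix with entries ŷ_{k,l} = y_{k,l} + Σ_{i=1}^{m} x_{k,i} z_{n−m+i, l}, satisfies the tetrahedron equation. -/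
/-!
If `f` is additive in each variable and associative, `f x (f z t) = f (f x z) t`, then
`(x, y, z) ↦ (x, y + f x z, z)` is a tetrahedron map: both sides of the equation change only the
fourth factor, to `r + f y t + f x (s + f z t)` and `r + f x s + f (y + f x z) t` respectively.
Here `f X Z = X * E * Z`, where `E = A * B` with `X * A` the first `m` columns of `X` and `B * Z`
the last `m` rows of `Z`.
-/

theorem isTetrahedronMap_add_mul_mul {R : Type*} [NonUnitalSemiring R] (a : R) :
    IsTetrahedronMap (fun p : R × R × R => (p.1, p.2.1 + p.1 * a * p.2.2, p.2.2)) := by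
  funext ⟨x, y, z, r, s, t⟩
  simp only [tetra123, tetra145, tetra246, tetra356, Function.comp_apply, Prod.mk.injEq,
    and_true, true_and]
  simp only [mul_add, add_mul, mul_assoc]
  abel

namespace Matrix

variable {ι κ ν μ R : Type*} [Fintype ν] [DecidableEq ν] [Semiring R]

theorem mul_one_submatrix_id (X : Matrix ι ν R) (f : κ → ν) :
    X * (1 : Matrix ν ν R).submatrix id f = X.submatrix id f := by
  ext k i
  simp [mul_apply, one_apply]

theorem one_submatrix_id_mul (Z : Matrix ν μ R) (g : κ → ν) :
    (1 : Matrix ν ν R).submatrix g id * Z = Z.submatrix g id := by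
  ext i l
  simp [mul_apply, one_apply]

theorem mul_one_submatrix_mul_one_submatrix_mul [Fintype κ] (X : Matrix ι ν R) (Z : Matrix ν μ R)
    (f g : κ → ν) :
    X * ((1 : Matrix ν ν R).submatrix id f * (1 : Matrix ν ν R).submatrix g id) * Z =
      X.submatrix id f * Z.submatrix g id := by
  rw [← Matrix.mul_assoc, Matrix.mul_assoc, mul_one_submatrix_id, one_submatrix_id_mul]

end Matrix

theorem stmt_7 (K : Type*) [Field K] (n m : ℕ) (hmn : m ≤ n) :
    IsTetrahedronMap (fun p :
        Matrix (Fin n) (Fin n) K × Matrix (Fin n) (Fin n) K × Matrix (Fin n) (Fin n) K =>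
      (p.1,
       Matrix.of (fun k l => p.2.1 k l + ∑ i : Fin m,
         p.1 k ⟨i.1, lt_of_lt_of_le i.isLt hmn⟩ *
           p.2.2 ⟨n - m + i.1, by have := i.isLt; omega⟩ l),
       p.2.2)) := by
  let firstCols : Fin m → Fin n := Fin.castLE hmn
  let lastRows : Fin m → Fin n := fun i => ⟨n - m + i.1, by omega⟩
  let E : Matrix (Fin n) (Fin n) K :=
    (1 : Matrix (Fin n) (Fin n) K).submatrix id firstCols *
      (1 : Matrix (Fin n) (Fin n) K).submatrix lastRows id
  convert isTetrahedronMap_add_mul_mul E using 4 with p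
  rw [Matrix.mul_one_submatrix_mul_one_submatrix_mul]
  rfl
end

section
/- Let K be a field and n, m positive integers with n+1 ≤ m ≤ 2n−1. Let Mat_n(K) denote the n×n matrices over K, and for X, Z ∈ Mat_n(K) write x_{k,l}, z_{k,l} for their entries. Then the map T̃_{n,m} : (Mat_n(K))³ → (Mat_n(K))³ sending (X, Y, Z) to (X, Ŷ, Z), where Ŷ is the matrix with entries ŷ_{k,l} = y_{k,l} + Σ_{i=1}^{2n−m} x_{k, m−n+i} z_{i, l}, satisfies the tetrahedron equation. -/
theorem Matrix.submatrix_id_mul_submatrix_id {l n p ι α : Type*} [Fintype n] [DecidableEq n]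
    [Fintype ι] [Semiring α] (X : Matrix l n α) (Z : Matrix n p α) (c r : ι → n) :
    X.submatrix id c * Z.submatrix r id =
      X * ((1 : Matrix n n α).submatrix id c * (1 : Matrix n n α).submatrix r id) * Z := by
  have hX : X * (1 : Matrix n n α).submatrix id c = X.submatrix id c :=
    Matrix.mul_submatrix_one (Equiv.refl n) c X
  have hZ : (1 : Matrix n n α).submatrix r id * Z = Z.submatrix r id :=
    Matrix.one_submatrix_mul r (Equiv.refl n) Z
  rw [Matrix.mul_assoc, Matrix.mul_assoc, ← Matrix.mul_assoc X, hX, hZ]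

theorem isTetrahedronMap_add_sum_mul {n ι K : Type*} [Fintype n] [Fintype ι] [Semiring K]
    (c r : ι → n) :
    IsTetrahedronMap (fun p : Matrix n n K × Matrix n n K × Matrix n n K =>
      (p.1, Matrix.of (fun k l => p.2.1 k l + ∑ i, p.1 k (c i) * p.2.2 (r i) l), p.2.2)) := by
  classical
  have h (X Y Z : Matrix n n K) :
      Matrix.of (fun k l => Y k l + ∑ i, X k (c i) * Z (r i) l) =
        Y + X * ((1 : Matrix n n K).submatrix id c * (1 : Matrix n n K).submatrix r id) * Z := by
    rw [← Matrix.submatrix_id_mul_submatrix_id]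
    rfl
  simp only [h]
  exact isTetrahedronMap_add_mul_mul _

theorem stmt_8 (K : Type*) [Field K] (n m : ℕ)
    (hm1 : n + 1 ≤ m) :
    IsTetrahedronMap (fun p :
        Matrix (Fin n) (Fin n) K × Matrix (Fin n) (Fin n) K × Matrix (Fin n) (Fin n) K =>
      (p.1,
       Matrix.of (fun k l => p.2.1 k l + ∑ i : Fin (2 * n - m),
         p.1 k ⟨m - n + i.1, by have := i.isLt; omega⟩ *
           p.2.2 ⟨i.1, by have := i.isLt; omega⟩ l),
       p.2.2)) :=
  isTetrahedronMap_add_sum_mul (K := K)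
    (fun i : Fin (2 * n - m) => (⟨m - n + i.1, by omega⟩ : Fin n))
    (fun i : Fin (2 * n - m) => (⟨i.1, by omega⟩ : Fin n))
end

section
/- Let G be a group. Then the following four maps G³ → G³ are tetrahedron maps: T₁(x,y,z) = (yxy, y⁻¹, z⁻¹); Ť₁(x,y,z) = (x⁻¹, zyz, z⁻¹); T₂(x,y,z) = (x⁻¹, xyx, z⁻¹); Ť₂(x,y,z) = (x⁻¹, y⁻¹, yzy). -/
/-!
`T₁` and `T₂` satisfy the tetrahedron equation by a direct computation with words in `G`.
`Ť₂` and `Ť₁` are their conjugates by the reversal `(x, y, z) ↦ (z, y, x)`, and this conjugation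
preserves tetrahedron maps: relabelling the six factors by the permutation `(1 6)(2 5)` turns
`T^{123}, T^{145}, T^{246}, T^{356}` into the reversed map acting on `356, 246, 145, 123`, so one
side of the equation for `T` becomes the other side of the equation for the reversed map.
-/

section Reversal

variable {D : Type*}

def reverseTriple (p : D × D × D) : D × D × D := (p.2.2, p.2.1, p.1)

def reverseSixfold (q : D × D × D × D × D × D) : D × D × D × D × D × D :=
  (q.2.2.2.2.2, q.2.2.2.2.1, q.2.2.1, q.2.2.2.1, q.2.1, q.1)

theorem reverseSixfold_reverseSixfold (q : D × D × D × D × D × D) :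
    reverseSixfold (reverseSixfold q) = q :=
  rfl

variable (T : D × D × D → D × D × D)

theorem tetra123_reverse :
    tetra123 (reverseTriple ∘ T ∘ reverseTriple) = reverseSixfold ∘ tetra356 T ∘ reverseSixfold :=
  rfl

theorem tetra145_reverse :
    tetra145 (reverseTriple ∘ T ∘ reverseTriple) = reverseSixfold ∘ tetra246 T ∘ reverseSixfold :=
  rfl

theorem tetra246_reverse :
    tetra246 (reverseTriple ∘ T ∘ reverseTriple) = reverseSixfold ∘ tetra145 T ∘ reverseSixfold :=
  rfl

theorem tetra356_reverse :
    tetra356 (reverseTriple ∘ T ∘ reverseTriple) = reverseSixfold ∘ tetra123 T ∘ reverseSixfold :=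
  rfl

variable {T}

theorem IsTetrahedronMap.reverse (h : IsTetrahedronMap T) :
    IsTetrahedronMap (reverseTriple ∘ T ∘ reverseTriple) := by
  unfold IsTetrahedronMap at h ⊢
  rw [tetra123_reverse, tetra145_reverse, tetra246_reverse, tetra356_reverse]
  funext q
  simpa only [Function.comp_apply, reverseSixfold_reverseSixfold] using
    congrArg reverseSixfold (congrFun h.symm (reverseSixfold q))

end Reversal

section GroupMaps

variable {G : Type*} [Group G]

def tetraT₁ (p : G × G × G) : G × G × G := (p.2.1 * p.1 * p.2.1, p.2.1⁻¹, p.2.2⁻¹)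

def tetraT₂ (p : G × G × G) : G × G × G := (p.1⁻¹, p.1 * p.2.1 * p.1, p.2.2⁻¹)

theorem isTetrahedronMap_tetraT₁ : IsTetrahedronMap (tetraT₁ (G := G)) := by
  funext ⟨x, y, z, r, s, t⟩
  simp only [tetra123, tetra145, tetra246, tetra356, tetraT₁, Function.comp_apply]
  ext <;> group

theorem isTetrahedronMap_tetraT₂ : IsTetrahedronMap (tetraT₂ (G := G)) := by
  funext ⟨x, y, z, r, s, t⟩
  simp only [tetra123, tetra145, tetra246, tetra356, tetraT₂, Function.comp_apply]
  ext <;> group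

end GroupMaps

theorem stmt_11 {G : Type*} [Group G] :
    IsTetrahedronMap (fun p : G × G × G => (p.2.1 * p.1 * p.2.1, p.2.1⁻¹, p.2.2⁻¹)) ∧
    IsTetrahedronMap (fun p : G × G × G => (p.1⁻¹, p.2.2 * p.2.1 * p.2.2, p.2.2⁻¹)) ∧
    IsTetrahedronMap (fun p : G × G × G => (p.1⁻¹, p.1 * p.2.1 * p.1, p.2.2⁻¹)) ∧
    IsTetrahedronMap (fun p : G × G × G => (p.1⁻¹, p.2.1⁻¹, p.2.1 * p.2.2 * p.2.1)) :=
  ⟨isTetrahedronMap_tetraT₁, isTetrahedronMap_tetraT₂.reverse, isTetrahedronMap_tetraT₂,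
    isTetrahedronMap_tetraT₁.reverse⟩
end

section
/- Let G be a group. Then the following four maps G³ → G³ are tetrahedron maps: T₃(x,y,z) = (yx⁻¹y, y, z⁻¹); Ť₃(x,y,z) = (x⁻¹, zy⁻¹z, z); T₄(x,y,z) = (x, xy⁻¹x, z⁻¹); Ť₄(x,y,z) = (x⁻¹, y, yz⁻¹y). -/
/-!
The four maps are built from the core quandle of `G`, `a ◃ b = a b⁻¹ a`, and from inversion,
which is an automorphism of it. For a map of the shape `(x, y, z) ↦ (y ◃ x, y, f z)` or
`(x, y, z) ↦ (x, x ◃ y, f z)` the tetrahedron equation reduces, component by component, to the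
self-distributivity of `◃` and to `f` preserving `◃`. This gives `T₃` and `T₄`; the maps `Ť₄`
and `Ť₃` are their conjugates by the reversal `(x, y, z) ↦ (z, y, x)`, which preserves
tetrahedron maps.
-/

open Function Quandles

def tripleReverse {D : Type*} (p : D × D × D) : D × D × D := (p.2.2, p.2.1, p.1)

theorem IsTetrahedronMap.conj_tripleReverse {D : Type*} {T : D × D × D → D × D × D}
    (hT : IsTetrahedronMap T) : IsTetrahedronMap (tripleReverse ∘ T ∘ tripleReverse) := by
  funext ⟨x₁, x₂, x₃, x₄, x₅, x₆⟩
  -- Reversing `D⁶` and then swapping its 3rd and 4th factors exchanges the two sides.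
  have h := congrFun hT (x₆, x₅, x₃, x₄, x₂, x₁)
  simp only [tetra123, tetra145, tetra246, tetra356, comp_apply, tripleReverse,
    Prod.mk.injEq] at h ⊢
  obtain ⟨h₁, h₂, h₃, h₄, h₅, h₆⟩ := h
  exact ⟨h₆.symm, h₅.symm, h₃.symm, h₄.symm, h₂.symm, h₁.symm⟩

section Shelf

variable {S : Type*} [Shelf S]

theorem isTetrahedronMap_act_left (f : S →◃ S) :
    IsTetrahedronMap (fun p : S × S × S => (p.2.1 ◃ p.1, p.2.1, f p.2.2)) := by
  funext ⟨x₁, x₂, x₃, x₄, x₅, x₆⟩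
  simp only [tetra123, tetra145, tetra246, tetra356, comp_apply, Prod.mk.injEq,
    ShelfHom.map_act, and_true]
  exact Shelf.self_distrib.symm

theorem isTetrahedronMap_act_right (f : S →◃ S) :
    IsTetrahedronMap (fun p : S × S × S => (p.1, p.1 ◃ p.2.1, f p.2.2)) := by
  funext ⟨x₁, x₂, x₃, x₄, x₅, x₆⟩
  simp only [tetra123, tetra145, tetra246, tetra356, comp_apply, Prod.mk.injEq,
    ShelfHom.map_act, true_and, and_true]
  exact Shelf.self_distrib

end Shelf

namespace Quandle

abbrev Core (G : Type*) := G

variable {G : Type*} [Group G]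

instance Core.shelf : Shelf (Core G) where
  act a b := a * b⁻¹ * a
  self_distrib {a b c} :=
    show a * (b * c⁻¹ * b)⁻¹ * a = a * b⁻¹ * a * (a * c⁻¹ * a)⁻¹ * (a * b⁻¹ * a) by group

def Core.inv : Core G →◃ Core G where
  toFun a := a⁻¹
  map_act' {a b} := show (a * b⁻¹ * a)⁻¹ = a⁻¹ * b⁻¹⁻¹ * a⁻¹ by group

end Quandle

theorem stmt_12 {G : Type*} [Group G] :
    IsTetrahedronMap (fun p : G × G × G => (p.2.1 * p.1⁻¹ * p.2.1, p.2.1, p.2.2⁻¹)) ∧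
    IsTetrahedronMap (fun p : G × G × G => (p.1⁻¹, p.2.2 * p.2.1⁻¹ * p.2.2, p.2.2)) ∧
    IsTetrahedronMap (fun p : G × G × G => (p.1, p.1 * p.2.1⁻¹ * p.1, p.2.2⁻¹)) ∧
    IsTetrahedronMap (fun p : G × G × G => (p.1⁻¹, p.2.1, p.2.1 * p.2.2⁻¹ * p.2.1)) := by
  have hT₃ := isTetrahedronMap_act_left (Quandle.Core.inv (G := G))
  have hT₄ := isTetrahedronMap_act_right (Quandle.Core.inv (G := G))
  exact ⟨hT₃, hT₄.conj_tripleReverse, hT₄, hT₃.conj_tripleReverse⟩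
end

section
/- There exists a group G such that the map T : G³ → G³, T(x,y,z) = (x, xyx⁻¹, z⁻¹), does not satisfy the tetrahedron equation; that is, there are elements (x,y,z,r,s,t) ∈ G⁶ at which T^{123} ∘ T^{145} ∘ T^{246} ∘ T^{356} and T^{356} ∘ T^{246} ∘ T^{145} ∘ T^{123} take different values. Likewise, there exists a group G such that the map T'(x,y,z) = (x⁻¹, y, yzy⁻¹) does not satisfy the tetrahedron equation. -/
/-!
Both maps are tetrahedron maps exactly when every square in `G` is central: on a generic point
the two sides of the equation differ only in one coordinate, where one side conjugates by an entry `g`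
and the other by `g⁻¹`, and `g h g⁻¹ = g⁻¹ h g` says that `g²` commutes with `h`. In `S₃` the square of a 3-cycle is a 3-cycle, which does not commute
with a transposition.
-/

section

variable {G : Type*} [Group G]

/-- `Ŷ × σ`, where `Ŷ(x, y) = (x, x y x⁻¹)` and `σ(z) = z⁻¹`. -/
def yangBaxterProdInv (p : G × G × G) : G × G × G :=
  (p.1, p.1 * p.2.1 * p.1⁻¹, p.2.2⁻¹)

/-- `σ × Ŷ`. -/
def invProdYangBaxter (p : G × G × G) : G × G × G :=
  (p.1⁻¹, p.2.1, p.2.1 * p.2.2 * p.2.1⁻¹)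

theorem conj_eq_conj_inv_iff_commute_sq (g h : G) :
    g * h * g⁻¹ = g⁻¹ * h * g ↔ Commute (g ^ 2) h := by
  rw [Commute, SemiconjBy, pow_two]
  constructor <;> intro e
  · calc g * g * h = g * (g * h * g⁻¹) * g := by group
      _ = g * (g⁻¹ * h * g) * g := by rw [e]
      _ = h * (g * g) := by group
  · calc g * h * g⁻¹ = g⁻¹ * (g * g * h) * g⁻¹ := by group
      _ = g⁻¹ * (h * (g * g)) * g⁻¹ := by rw [e]
      _ = g⁻¹ * h * g := by group

theorem tetrahedron_lhs_yangBaxterProdInv (x y z r s t : G) :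
    (tetra123 yangBaxterProdInv ∘ tetra145 yangBaxterProdInv ∘ tetra246 yangBaxterProdInv ∘
      tetra356 yangBaxterProdInv) (x, y, z, r, s, t) =
      (x, x * y * x⁻¹, z⁻¹, x * y * r * y⁻¹ * x⁻¹, z * s⁻¹ * z⁻¹, t) := by
  simp only [tetra123, tetra145, tetra246, tetra356, yangBaxterProdInv, Function.comp_apply,
    Prod.mk.injEq]
  and_intros <;> group

theorem tetrahedron_rhs_yangBaxterProdInv (x y z r s t : G) :
    (tetra356 yangBaxterProdInv ∘ tetra246 yangBaxterProdInv ∘ tetra145 yangBaxterProdInv ∘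
      tetra123 yangBaxterProdInv) (x, y, z, r, s, t) =
      (x, x * y * x⁻¹, z⁻¹, x * y * r * y⁻¹ * x⁻¹, z⁻¹ * s⁻¹ * z, t) := by
  simp only [tetra123, tetra145, tetra246, tetra356, yangBaxterProdInv, Function.comp_apply,
    Prod.mk.injEq]
  and_intros <;> group

theorem tetrahedron_lhs_invProdYangBaxter (x y z r s t : G) :
    (tetra123 invProdYangBaxter ∘ tetra145 invProdYangBaxter ∘ tetra246 invProdYangBaxter ∘
      tetra356 invProdYangBaxter) (x, y, z, r, s, t) =
      (x, y⁻¹, y⁻¹ * z⁻¹ * y, r, r * s * r⁻¹, r * s * t * s⁻¹ * r⁻¹) := by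
  simp only [tetra123, tetra145, tetra246, tetra356, invProdYangBaxter, Function.comp_apply,
    Prod.mk.injEq]
  and_intros <;> group

theorem tetrahedron_rhs_invProdYangBaxter (x y z r s t : G) :
    (tetra356 invProdYangBaxter ∘ tetra246 invProdYangBaxter ∘ tetra145 invProdYangBaxter ∘
      tetra123 invProdYangBaxter) (x, y, z, r, s, t) =
      (x, y⁻¹, y * z⁻¹ * y⁻¹, r, r * s * r⁻¹, r * s * t * s⁻¹ * r⁻¹) := by
  simp only [tetra123, tetra145, tetra246, tetra356, invProdYangBaxter, Function.comp_apply,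
    Prod.mk.injEq]
  and_intros <;> group

theorem isTetrahedronMap_yangBaxterProdInv_iff :
    IsTetrahedronMap (yangBaxterProdInv (G := G)) ↔ ∀ g h : G, Commute (g ^ 2) h := by
  simp only [IsTetrahedronMap, funext_iff, Prod.forall, tetrahedron_lhs_yangBaxterProdInv,
    tetrahedron_rhs_yangBaxterProdInv, Prod.mk.injEq, true_and, and_true]
  refine ⟨fun h g k => ?_, fun h x y z r s t => ?_⟩
  · simpa [conj_eq_conj_inv_iff_commute_sq] using h 1 1 g 1 k⁻¹ 1
  · exact (conj_eq_conj_inv_iff_commute_sq z s⁻¹).2 (h z s⁻¹)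

theorem isTetrahedronMap_invProdYangBaxter_iff :
    IsTetrahedronMap (invProdYangBaxter (G := G)) ↔ ∀ g h : G, Commute (g ^ 2) h := by
  simp only [IsTetrahedronMap, funext_iff, Prod.forall, tetrahedron_lhs_invProdYangBaxter,
    tetrahedron_rhs_invProdYangBaxter, Prod.mk.injEq, true_and, and_true]
  refine ⟨fun h g k => ?_, fun h x y z r s t => ?_⟩
  · simpa [conj_eq_conj_inv_iff_commute_sq] using (h 1 g⁻¹ k⁻¹ 1 1 1)
  · simpa only [inv_inv] using (conj_eq_conj_inv_iff_commute_sq y⁻¹ z⁻¹).2 (h y⁻¹ z⁻¹)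

end

theorem not_commute_finRotate_sq_swap :
    ¬ Commute (finRotate 3 ^ 2) (Equiv.swap (0 : Fin 3) 2) := by
  rw [Commute, SemiconjBy]
  decide

theorem stmt_13 :
    (∃ (G : Type) (_ : Group G),
      ¬ IsTetrahedronMap (fun p : G × G × G => (p.1, p.1 * p.2.1 * p.1⁻¹, p.2.2⁻¹))) ∧
    (∃ (G : Type) (_ : Group G),
      ¬ IsTetrahedronMap (fun p : G × G × G => (p.1⁻¹, p.2.1, p.2.1 * p.2.2 * p.2.1⁻¹))) :=
  ⟨⟨Equiv.Perm (Fin 3), inferInstance, fun h =>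
      not_commute_finRotate_sq_swap (isTetrahedronMap_yangBaxterProdInv_iff.1 h _ _)⟩,
    ⟨Equiv.Perm (Fin 3), inferInstance, fun h =>
      not_commute_finRotate_sq_swap (isTetrahedronMap_invProdYangBaxter_iff.1 h _ _)⟩⟩
end

section
/- Let E be a real normed vector space and T : E³ → E³ a differentiable tetrahedron map, with components T = (f, g, h), f, g, h : E³ → E. Define the tangent map dT : (E × E)³ → (E × E)³ by dT((x,X),(y,Y),(z,Z)) = ((f(x,y,z), Df|_{(x,y,z)}(X,Y,Z)), (g(x,y,z), Dg|_{(x,y,z)}(X,Y,Z)), (h(x,y,z), Dh|_{(x,y,z)}(X,Y,Z))), where Df|_{(x,y,z)} denotes the Fréchet derivative of f at (x,y,z) applied to the tangent vector (X,Y,Z) ∈ E³. Then dT is a tetrahedron map of (E × E)³. -/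
section Aux

variable {X Y Z : Type*} [NormedAddCommGroup X] [NormedSpace ℝ X]
  [NormedAddCommGroup Y] [NormedSpace ℝ Y] [NormedAddCommGroup Z] [NormedSpace ℝ Z]

/-- tangent map -/
noncomputable def tanMap (F : X → Y) : X × X → Y × Y :=
  fun p => (F p.1, fderiv ℝ F p.1 p.2)

theorem tanMap_comp (F : Y → Z) (G : X → Y) (hF : Differentiable ℝ F)
    (hG : Differentiable ℝ G) : tanMap (F ∘ G) = tanMap F ∘ tanMap G := by
  funext p
  simp only [tanMap, Function.comp_apply]
  rw [fderiv_comp _ (hF _) (hG _)]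
  rfl

end Aux

section Main

variable {E : Type*} [NormedAddCommGroup E] [NormedSpace ℝ E]

/-- the tangent map in zipped coordinates -/
noncomputable def dTan (T : E × E × E → E × E × E) :
    (E × E) × (E × E) × (E × E) → (E × E) × (E × E) × (E × E) :=
  fun q =>
    (((T (q.1.1, q.2.1.1, q.2.2.1)).1,
      fderiv ℝ (fun p : E × E × E => (T p).1) (q.1.1, q.2.1.1, q.2.2.1)
        (q.1.2, q.2.1.2, q.2.2.2)),
     ((T (q.1.1, q.2.1.1, q.2.2.1)).2.1,
      fderiv ℝ (fun p : E × E × E => (T p).2.1) (q.1.1, q.2.1.1, q.2.2.1)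
        (q.1.2, q.2.1.2, q.2.2.2)),
     ((T (q.1.1, q.2.1.1, q.2.2.1)).2.2,
      fderiv ℝ (fun p : E × E × E => (T p).2.2) (q.1.1, q.2.1.1, q.2.2.1)
        (q.1.2, q.2.1.2, q.2.2.2)))

/-- unzip -/
def zPhi : (E × E) × (E × E) × (E × E) × (E × E) × (E × E) × (E × E) →
    (E × E × E × E × E × E) × (E × E × E × E × E × E) :=
  fun q =>
    ((q.1.1, q.2.1.1, q.2.2.1.1, q.2.2.2.1.1, q.2.2.2.2.1.1, q.2.2.2.2.2.1),
     (q.1.2, q.2.1.2, q.2.2.1.2, q.2.2.2.1.2, q.2.2.2.2.1.2, q.2.2.2.2.2.2))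

/-- zip -/
def zPsi : (E × E × E × E × E × E) × (E × E × E × E × E × E) →
    (E × E) × (E × E) × (E × E) × (E × E) × (E × E) × (E × E) :=
  fun q =>
    ((q.1.1, q.2.1), (q.1.2.1, q.2.2.1), (q.1.2.2.1, q.2.2.2.1),
     (q.1.2.2.2.1, q.2.2.2.2.1), (q.1.2.2.2.2.1, q.2.2.2.2.2.1),
     (q.1.2.2.2.2.2, q.2.2.2.2.2.2))

variable (T : E × E × E → E × E × E)

theorem fderiv_comp1 (hdiff : Differentiable ℝ T) (p v : E × E × E) :
    fderiv ℝ (fun p : E × E × E => (T p).1) p v = (fderiv ℝ T p v).1 := by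
  rw [((hdiff p).hasFDerivAt.fst).fderiv]; rfl

theorem fderiv_comp21 (hdiff : Differentiable ℝ T) (p v : E × E × E) :
    fderiv ℝ (fun p : E × E × E => (T p).2.1) p v = (fderiv ℝ T p v).2.1 := by
  rw [((hdiff p).hasFDerivAt.snd.fst).fderiv]; rfl

theorem fderiv_comp22 (hdiff : Differentiable ℝ T) (p v : E × E × E) :
    fderiv ℝ (fun p : E × E × E => (T p).2.2) p v = (fderiv ℝ T p v).2.2 := by
  rw [((hdiff p).hasFDerivAt.snd.snd).fderiv]; rfl

theorem key123 (hdiff : Differentiable ℝ T) (q v : E × E × E × E × E × E) :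
    fderiv ℝ (tetra123 T) q v =
      ((fderiv ℝ T (q.1, q.2.1, q.2.2.1) (v.1, v.2.1, v.2.2.1)).1,
       (fderiv ℝ T (q.1, q.2.1, q.2.2.1) (v.1, v.2.1, v.2.2.1)).2.1,
       (fderiv ℝ T (q.1, q.2.1, q.2.2.1) (v.1, v.2.1, v.2.2.1)).2.2,
       v.2.2.2.1, v.2.2.2.2.1, v.2.2.2.2.2) := by
  have h1 := hasFDerivAt_fst (𝕜 := ℝ) (p := q)
  have h2 := hasFDerivAt_snd (𝕜 := ℝ) (p := q)
  have hπ := h1.prodMk (h2.fst.prodMk h2.snd.fst)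
  have hTc := ((hdiff _).hasFDerivAt).comp q hπ
  have hfull := hTc.fst.prodMk (hTc.snd.fst.prodMk (hTc.snd.snd.prodMk
      (h2.snd.snd.fst.prodMk (h2.snd.snd.snd.fst.prodMk h2.snd.snd.snd.snd))))
  have h : fderiv ℝ (tetra123 T) q = _ := HasFDerivAt.fderiv (f := tetra123 T) hfull
  rw [h]; simp

theorem diff123 (hdiff : Differentiable ℝ T) : Differentiable ℝ (tetra123 T) := by
  intro q
  have h1 := hasFDerivAt_fst (𝕜 := ℝ) (p := q)
  have h2 := hasFDerivAt_snd (𝕜 := ℝ) (p := q)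
  have hπ := h1.prodMk (h2.fst.prodMk h2.snd.fst)
  have hTc := ((hdiff _).hasFDerivAt).comp q hπ
  exact (hTc.fst.prodMk (hTc.snd.fst.prodMk (hTc.snd.snd.prodMk
      (h2.snd.snd.fst.prodMk (h2.snd.snd.snd.fst.prodMk h2.snd.snd.snd.snd))))).differentiableAt

theorem key145 (hdiff : Differentiable ℝ T) (q v : E × E × E × E × E × E) :
    fderiv ℝ (tetra145 T) q v =
      ((fderiv ℝ T (q.1, q.2.2.2.1, q.2.2.2.2.1) (v.1, v.2.2.2.1, v.2.2.2.2.1)).1,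
       v.2.1, v.2.2.1,
       (fderiv ℝ T (q.1, q.2.2.2.1, q.2.2.2.2.1) (v.1, v.2.2.2.1, v.2.2.2.2.1)).2.1,
       (fderiv ℝ T (q.1, q.2.2.2.1, q.2.2.2.2.1) (v.1, v.2.2.2.1, v.2.2.2.2.1)).2.2,
       v.2.2.2.2.2) := by
  have h1 := hasFDerivAt_fst (𝕜 := ℝ) (p := q)
  have h2 := hasFDerivAt_snd (𝕜 := ℝ) (p := q)
  have hπ := h1.prodMk (h2.snd.snd.fst.prodMk h2.snd.snd.snd.fst)
  have hTc := ((hdiff _).hasFDerivAt).comp q hπ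
  have hfull := hTc.fst.prodMk (h2.fst.prodMk (h2.snd.fst.prodMk
      (hTc.snd.fst.prodMk (hTc.snd.snd.prodMk h2.snd.snd.snd.snd))))
  have h : fderiv ℝ (tetra145 T) q = _ := HasFDerivAt.fderiv (f := tetra145 T) hfull
  rw [h]; simp

theorem diff145 (hdiff : Differentiable ℝ T) : Differentiable ℝ (tetra145 T) := by
  intro q
  have h1 := hasFDerivAt_fst (𝕜 := ℝ) (p := q)
  have h2 := hasFDerivAt_snd (𝕜 := ℝ) (p := q)
  have hπ := h1.prodMk (h2.snd.snd.fst.prodMk h2.snd.snd.snd.fst)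
  have hTc := ((hdiff _).hasFDerivAt).comp q hπ
  exact (hTc.fst.prodMk (h2.fst.prodMk (h2.snd.fst.prodMk
      (hTc.snd.fst.prodMk (hTc.snd.snd.prodMk h2.snd.snd.snd.snd))))).differentiableAt

theorem key246 (hdiff : Differentiable ℝ T) (q v : E × E × E × E × E × E) :
    fderiv ℝ (tetra246 T) q v =
      (v.1,
       (fderiv ℝ T (q.2.1, q.2.2.2.1, q.2.2.2.2.2) (v.2.1, v.2.2.2.1, v.2.2.2.2.2)).1,
       v.2.2.1,
       (fderiv ℝ T (q.2.1, q.2.2.2.1, q.2.2.2.2.2) (v.2.1, v.2.2.2.1, v.2.2.2.2.2)).2.1,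
       v.2.2.2.2.1,
       (fderiv ℝ T (q.2.1, q.2.2.2.1, q.2.2.2.2.2) (v.2.1, v.2.2.2.1, v.2.2.2.2.2)).2.2) := by
  have h1 := hasFDerivAt_fst (𝕜 := ℝ) (p := q)
  have h2 := hasFDerivAt_snd (𝕜 := ℝ) (p := q)
  have hπ := h2.fst.prodMk (h2.snd.snd.fst.prodMk h2.snd.snd.snd.snd)
  have hTc := ((hdiff _).hasFDerivAt).comp q hπ
  have hfull := h1.prodMk (hTc.fst.prodMk (h2.snd.fst.prodMk
      (hTc.snd.fst.prodMk (h2.snd.snd.snd.fst.prodMk hTc.snd.snd))))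
  have h : fderiv ℝ (tetra246 T) q = _ := HasFDerivAt.fderiv (f := tetra246 T) hfull
  rw [h]; simp

theorem diff246 (hdiff : Differentiable ℝ T) : Differentiable ℝ (tetra246 T) := by
  intro q
  have h1 := hasFDerivAt_fst (𝕜 := ℝ) (p := q)
  have h2 := hasFDerivAt_snd (𝕜 := ℝ) (p := q)
  have hπ := h2.fst.prodMk (h2.snd.snd.fst.prodMk h2.snd.snd.snd.snd)
  have hTc := ((hdiff _).hasFDerivAt).comp q hπ
  exact (h1.prodMk (hTc.fst.prodMk (h2.snd.fst.prodMk
      (hTc.snd.fst.prodMk (h2.snd.snd.snd.fst.prodMk hTc.snd.snd))))).differentiableAt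

theorem key356 (hdiff : Differentiable ℝ T) (q v : E × E × E × E × E × E) :
    fderiv ℝ (tetra356 T) q v =
      (v.1, v.2.1,
       (fderiv ℝ T (q.2.2.1, q.2.2.2.2.1, q.2.2.2.2.2) (v.2.2.1, v.2.2.2.2.1, v.2.2.2.2.2)).1,
       v.2.2.2.1,
       (fderiv ℝ T (q.2.2.1, q.2.2.2.2.1, q.2.2.2.2.2) (v.2.2.1, v.2.2.2.2.1, v.2.2.2.2.2)).2.1,
       (fderiv ℝ T (q.2.2.1, q.2.2.2.2.1, q.2.2.2.2.2) (v.2.2.1, v.2.2.2.2.1, v.2.2.2.2.2)).2.2) := by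
  have h1 := hasFDerivAt_fst (𝕜 := ℝ) (p := q)
  have h2 := hasFDerivAt_snd (𝕜 := ℝ) (p := q)
  have hπ := h2.snd.fst.prodMk (h2.snd.snd.snd.fst.prodMk h2.snd.snd.snd.snd)
  have hTc := ((hdiff _).hasFDerivAt).comp q hπ
  have hfull := h1.prodMk (h2.fst.prodMk (hTc.fst.prodMk
      (h2.snd.snd.fst.prodMk (hTc.snd.fst.prodMk hTc.snd.snd))))
  have h : fderiv ℝ (tetra356 T) q = _ := HasFDerivAt.fderiv (f := tetra356 T) hfull
  rw [h]; simp

theorem diff356 (hdiff : Differentiable ℝ T) : Differentiable ℝ (tetra356 T) := by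
  intro q
  have h1 := hasFDerivAt_fst (𝕜 := ℝ) (p := q)
  have h2 := hasFDerivAt_snd (𝕜 := ℝ) (p := q)
  have hπ := h2.snd.fst.prodMk (h2.snd.snd.snd.fst.prodMk h2.snd.snd.snd.snd)
  have hTc := ((hdiff _).hasFDerivAt).comp q hπ
  exact (h1.prodMk (h2.fst.prodMk (hTc.fst.prodMk
      (h2.snd.snd.fst.prodMk (hTc.snd.fst.prodMk hTc.snd.snd))))).differentiableAt

theorem conj123 (hdiff : Differentiable ℝ T) : tetra123 (dTan T) = zPsi ∘ tanMap (tetra123 T) ∘ zPhi := by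
  funext q
  simp only [tetra123, dTan, zPsi, zPhi, tanMap, Function.comp_apply,
    key123 T hdiff, fderiv_comp1 T hdiff, fderiv_comp21 T hdiff, fderiv_comp22 T hdiff]

theorem conj145 (hdiff : Differentiable ℝ T) : tetra145 (dTan T) = zPsi ∘ tanMap (tetra145 T) ∘ zPhi := by
  funext q
  simp only [tetra145, dTan, zPsi, zPhi, tanMap, Function.comp_apply,
    key145 T hdiff, fderiv_comp1 T hdiff, fderiv_comp21 T hdiff, fderiv_comp22 T hdiff]

theorem conj246 (hdiff : Differentiable ℝ T) : tetra246 (dTan T) = zPsi ∘ tanMap (tetra246 T) ∘ zPhi := by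
  funext q
  simp only [tetra246, dTan, zPsi, zPhi, tanMap, Function.comp_apply,
    key246 T hdiff, fderiv_comp1 T hdiff, fderiv_comp21 T hdiff, fderiv_comp22 T hdiff]

theorem conj356 (hdiff : Differentiable ℝ T) : tetra356 (dTan T) = zPsi ∘ tanMap (tetra356 T) ∘ zPhi := by
  funext q
  simp only [tetra356, dTan, zPsi, zPhi, tanMap, Function.comp_apply,
    key356 T hdiff, fderiv_comp1 T hdiff, fderiv_comp21 T hdiff, fderiv_comp22 T hdiff]

end Main

theorem stmt_14 {E : Type*} [NormedAddCommGroup E] [NormedSpace ℝ E]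
    (T : E × E × E → E × E × E) (hdiff : Differentiable ℝ T)
    (hT : IsTetrahedronMap T) :
    IsTetrahedronMap (fun q : (E × E) × (E × E) × (E × E) =>
      (((T (q.1.1, q.2.1.1, q.2.2.1)).1,
        fderiv ℝ (fun p : E × E × E => (T p).1) (q.1.1, q.2.1.1, q.2.2.1)
          (q.1.2, q.2.1.2, q.2.2.2)),
       ((T (q.1.1, q.2.1.1, q.2.2.1)).2.1,
        fderiv ℝ (fun p : E × E × E => (T p).2.1) (q.1.1, q.2.1.1, q.2.2.1)
          (q.1.2, q.2.1.2, q.2.2.2)),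
       ((T (q.1.1, q.2.1.1, q.2.2.1)).2.2,
        fderiv ℝ (fun p : E × E × E => (T p).2.2) (q.1.1, q.2.1.1, q.2.2.1)
          (q.1.2, q.2.1.2, q.2.2.2)))) := by
  show IsTetrahedronMap (dTan T)
  have d123 := diff123 T hdiff
  have d145 := diff145 T hdiff
  have d246 := diff246 T hdiff
  have d356 := diff356 T hdiff
  unfold IsTetrahedronMap at hT ⊢
  have hcomp : tanMap (tetra123 T) ∘ tanMap (tetra145 T) ∘ tanMap (tetra246 T) ∘
      tanMap (tetra356 T) = tanMap (tetra356 T) ∘ tanMap (tetra246 T) ∘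
      tanMap (tetra145 T) ∘ tanMap (tetra123 T) := by
    rw [← tanMap_comp _ _ d246 d356, ← tanMap_comp _ _ d145 (d246.comp d356),
      ← tanMap_comp _ _ d123 (d145.comp (d246.comp d356)),
      ← tanMap_comp _ _ d145 d123, ← tanMap_comp _ _ d246 (d145.comp d123),
      ← tanMap_comp _ _ d356 (d246.comp (d145.comp d123)), hT]
  rw [conj123 T hdiff, conj145 T hdiff, conj246 T hdiff, conj356 T hdiff]
  funext q
  have hΦΨ : ∀ x : (E × E × E × E × E × E) × (E × E × E × E × E × E),
      zPhi (zPsi x) = x := fun x => rfl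
  simp only [Function.comp_apply, hΦΨ]
  have h := congrFun hcomp (zPhi q)
  simp only [Function.comp_apply] at h
  rw [h]
end

section
/- Let E be a real normed vector space, T : E³ → E³ a tetrahedron map differentiable at the point (p,p,p), and suppose T(p,p,p) = (p,p,p). Then the Fréchet derivative L = DT|_{(p,p,p)} : E³ → E³ is a linear map satisfying the tetrahedron equation; i.e., L is a linear tetrahedron map, which is the linear approximation of T at (p,p,p). -/
section Aux

open ContinuousLinearMap

variable {E : Type*} [NormedAddCommGroup E] [NormedSpace ℝ E]

private noncomputable def pr1 : (E × E × E) →L[ℝ] E := fst ℝ E (E × E)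
private noncomputable def pr21 : (E × E × E) →L[ℝ] E :=
  (fst ℝ E E).comp (snd ℝ E (E × E))
private noncomputable def pr22 : (E × E × E) →L[ℝ] E :=
  (snd ℝ E E).comp (snd ℝ E (E × E))

private noncomputable def q1 : (E × E × E × E × E × E) →L[ℝ] E :=
  fst ℝ E (E × E × E × E × E)
private noncomputable def q2 : (E × E × E × E × E × E) →L[ℝ] E :=
  (fst ℝ E (E × E × E × E)).comp (snd ℝ E (E × E × E × E × E))
private noncomputable def q3 : (E × E × E × E × E × E) →L[ℝ] E :=
  ((fst ℝ E (E × E × E)).comp (snd ℝ E (E × E × E × E))).comp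
    (snd ℝ E (E × E × E × E × E))
private noncomputable def q4 : (E × E × E × E × E × E) →L[ℝ] E :=
  (((fst ℝ E (E × E)).comp (snd ℝ E (E × E × E))).comp
    (snd ℝ E (E × E × E × E))).comp (snd ℝ E (E × E × E × E × E))
private noncomputable def q5 : (E × E × E × E × E × E) →L[ℝ] E :=
  ((((fst ℝ E E).comp (snd ℝ E (E × E))).comp (snd ℝ E (E × E × E))).comp
    (snd ℝ E (E × E × E × E))).comp (snd ℝ E (E × E × E × E × E))
private noncomputable def q6 : (E × E × E × E × E × E) →L[ℝ] E :=
  ((((snd ℝ E E).comp (snd ℝ E (E × E))).comp (snd ℝ E (E × E × E))).comp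
    (snd ℝ E (E × E × E × E))).comp (snd ℝ E (E × E × E × E × E))

private lemma hq1 {pt : E × E × E × E × E × E} :
    HasFDerivAt (fun q : E × E × E × E × E × E => q.1) (q1 (E := E)) pt :=
  (q1 (E := E)).hasFDerivAt
private lemma hq2 {pt : E × E × E × E × E × E} :
    HasFDerivAt (fun q : E × E × E × E × E × E => q.2.1) (q2 (E := E)) pt :=
  (q2 (E := E)).hasFDerivAt
private lemma hq3 {pt : E × E × E × E × E × E} :
    HasFDerivAt (fun q : E × E × E × E × E × E => q.2.2.1) (q3 (E := E)) pt :=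
  (q3 (E := E)).hasFDerivAt
private lemma hq4 {pt : E × E × E × E × E × E} :
    HasFDerivAt (fun q : E × E × E × E × E × E => q.2.2.2.1) (q4 (E := E)) pt :=
  (q4 (E := E)).hasFDerivAt
private lemma hq5 {pt : E × E × E × E × E × E} :
    HasFDerivAt (fun q : E × E × E × E × E × E => q.2.2.2.2.1) (q5 (E := E)) pt :=
  (q5 (E := E)).hasFDerivAt
private lemma hq6 {pt : E × E × E × E × E × E} :
    HasFDerivAt (fun q : E × E × E × E × E × E => q.2.2.2.2.2) (q6 (E := E)) pt :=
  (q6 (E := E)).hasFDerivAt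

private lemma exists123 {T : E × E × E → E × E × E}
    {L : (E × E × E) →L[ℝ] (E × E × E)} {x y z r s t : E}
    (h : HasFDerivAt T L (x, y, z)) :
    ∃ M : (E × E × E × E × E × E) →L[ℝ] (E × E × E × E × E × E),
      HasFDerivAt (tetra123 T) M (x, y, z, r, s, t) ∧ ⇑M = tetra123 ⇑L := by
  set π : (E × E × E × E × E × E) →L[ℝ] (E × E × E) :=
    (q1 (E := E)).prod ((q2 (E := E)).prod (q3 (E := E))) with hπ
  have hg : HasFDerivAt (fun q : E × E × E × E × E × E =>
      T (q.1, q.2.1, q.2.2.1)) (L.comp π) (x, y, z, r, s, t) := by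
    have hg0 := h.comp ((x, y, z, r, s, t) : E × E × E × E × E × E)
        (f := fun q : E × E × E × E × E × E => (q.1, q.2.1, q.2.2.1)) (hq1.prodMk (hq2.prodMk hq3))
    exact hg0
  refine ⟨((pr1 (E := E)).comp (L.comp π)).prod
      (((pr21 (E := E)).comp (L.comp π)).prod
        (((pr22 (E := E)).comp (L.comp π)).prod
          ((q4 (E := E)).prod ((q5 (E := E)).prod (q6 (E := E)))))), ?_, ?_⟩
  · have heq : tetra123 T = fun q : E × E × E × E × E × E =>
        ((T (q.1, q.2.1, q.2.2.1)).1, (T (q.1, q.2.1, q.2.2.1)).2.1,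
          (T (q.1, q.2.1, q.2.2.1)).2.2, q.2.2.2.1, q.2.2.2.2.1, q.2.2.2.2.2) := by
      funext ⟨a, b, c, d, e, f⟩; rfl
    rw [heq]
    exact (((pr1 (E := E)).hasFDerivAt.comp _ hg).prodMk
      (((pr21 (E := E)).hasFDerivAt.comp _ hg).prodMk
        (((pr22 (E := E)).hasFDerivAt.comp _ hg).prodMk
          (hq4.prodMk (hq5.prodMk hq6)))))
  · funext ⟨a, b, c, d, e, f⟩; rfl

private lemma exists145 {T : E × E × E → E × E × E}
    {L : (E × E × E) →L[ℝ] (E × E × E)} {x y z r s t : E}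
    (h : HasFDerivAt T L (x, r, s)) :
    ∃ M : (E × E × E × E × E × E) →L[ℝ] (E × E × E × E × E × E),
      HasFDerivAt (tetra145 T) M (x, y, z, r, s, t) ∧ ⇑M = tetra145 ⇑L := by
  set π : (E × E × E × E × E × E) →L[ℝ] (E × E × E) :=
    (q1 (E := E)).prod ((q4 (E := E)).prod (q5 (E := E))) with hπ
  have hg : HasFDerivAt (fun q : E × E × E × E × E × E =>
      T (q.1, q.2.2.2.1, q.2.2.2.2.1)) (L.comp π) (x, y, z, r, s, t) := by
    have hg0 := h.comp ((x, y, z, r, s, t) : E × E × E × E × E × E)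
        (f := fun q : E × E × E × E × E × E => (q.1, q.2.2.2.1, q.2.2.2.2.1)) (hq1.prodMk (hq4.prodMk hq5))
    exact hg0
  refine ⟨((pr1 (E := E)).comp (L.comp π)).prod
      ((q2 (E := E)).prod ((q3 (E := E)).prod
        (((pr21 (E := E)).comp (L.comp π)).prod
          (((pr22 (E := E)).comp (L.comp π)).prod (q6 (E := E)))))), ?_, ?_⟩
  · have heq : tetra145 T = fun q : E × E × E × E × E × E =>
        ((T (q.1, q.2.2.2.1, q.2.2.2.2.1)).1, q.2.1, q.2.2.1,
          (T (q.1, q.2.2.2.1, q.2.2.2.2.1)).2.1,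
          (T (q.1, q.2.2.2.1, q.2.2.2.2.1)).2.2, q.2.2.2.2.2) := by
      funext ⟨a, b, c, d, e, f⟩; rfl
    rw [heq]
    exact (((pr1 (E := E)).hasFDerivAt.comp _ hg).prodMk
      (hq2.prodMk (hq3.prodMk
        (((pr21 (E := E)).hasFDerivAt.comp _ hg).prodMk
          (((pr22 (E := E)).hasFDerivAt.comp _ hg).prodMk hq6)))))
  · funext ⟨a, b, c, d, e, f⟩; rfl

private lemma exists246 {T : E × E × E → E × E × E}
    {L : (E × E × E) →L[ℝ] (E × E × E)} {x y z r s t : E}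
    (h : HasFDerivAt T L (y, r, t)) :
    ∃ M : (E × E × E × E × E × E) →L[ℝ] (E × E × E × E × E × E),
      HasFDerivAt (tetra246 T) M (x, y, z, r, s, t) ∧ ⇑M = tetra246 ⇑L := by
  set π : (E × E × E × E × E × E) →L[ℝ] (E × E × E) :=
    (q2 (E := E)).prod ((q4 (E := E)).prod (q6 (E := E))) with hπ
  have hg : HasFDerivAt (fun q : E × E × E × E × E × E =>
      T (q.2.1, q.2.2.2.1, q.2.2.2.2.2)) (L.comp π) (x, y, z, r, s, t) := by
    have hg0 := h.comp ((x, y, z, r, s, t) : E × E × E × E × E × E)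
        (f := fun q : E × E × E × E × E × E => (q.2.1, q.2.2.2.1, q.2.2.2.2.2)) (hq2.prodMk (hq4.prodMk hq6))
    exact hg0
  refine ⟨(q1 (E := E)).prod
      (((pr1 (E := E)).comp (L.comp π)).prod
        ((q3 (E := E)).prod
          (((pr21 (E := E)).comp (L.comp π)).prod
            ((q5 (E := E)).prod ((pr22 (E := E)).comp (L.comp π)))))), ?_, ?_⟩
  · have heq : tetra246 T = fun q : E × E × E × E × E × E =>
        (q.1, (T (q.2.1, q.2.2.2.1, q.2.2.2.2.2)).1, q.2.2.1,
          (T (q.2.1, q.2.2.2.1, q.2.2.2.2.2)).2.1, q.2.2.2.2.1,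
          (T (q.2.1, q.2.2.2.1, q.2.2.2.2.2)).2.2) := by
      funext ⟨a, b, c, d, e, f⟩; rfl
    rw [heq]
    exact (hq1.prodMk
      (((pr1 (E := E)).hasFDerivAt.comp _ hg).prodMk
        (hq3.prodMk
          (((pr21 (E := E)).hasFDerivAt.comp _ hg).prodMk
            (hq5.prodMk ((pr22 (E := E)).hasFDerivAt.comp _ hg))))))
  · funext ⟨a, b, c, d, e, f⟩; rfl

private lemma exists356 {T : E × E × E → E × E × E}
    {L : (E × E × E) →L[ℝ] (E × E × E)} {x y z r s t : E}
    (h : HasFDerivAt T L (z, s, t)) :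
    ∃ M : (E × E × E × E × E × E) →L[ℝ] (E × E × E × E × E × E),
      HasFDerivAt (tetra356 T) M (x, y, z, r, s, t) ∧ ⇑M = tetra356 ⇑L := by
  set π : (E × E × E × E × E × E) →L[ℝ] (E × E × E) :=
    (q3 (E := E)).prod ((q5 (E := E)).prod (q6 (E := E))) with hπ
  have hg : HasFDerivAt (fun q : E × E × E × E × E × E =>
      T (q.2.2.1, q.2.2.2.2.1, q.2.2.2.2.2)) (L.comp π) (x, y, z, r, s, t) := by
    have hg0 := h.comp ((x, y, z, r, s, t) : E × E × E × E × E × E)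
        (f := fun q : E × E × E × E × E × E => (q.2.2.1, q.2.2.2.2.1, q.2.2.2.2.2)) (hq3.prodMk (hq5.prodMk hq6))
    exact hg0
  refine ⟨(q1 (E := E)).prod
      ((q2 (E := E)).prod
        (((pr1 (E := E)).comp (L.comp π)).prod
          ((q4 (E := E)).prod
            (((pr21 (E := E)).comp (L.comp π)).prod
              ((pr22 (E := E)).comp (L.comp π)))))), ?_, ?_⟩
  · have heq : tetra356 T = fun q : E × E × E × E × E × E =>
        (q.1, q.2.1, (T (q.2.2.1, q.2.2.2.2.1, q.2.2.2.2.2)).1, q.2.2.2.1,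
          (T (q.2.2.1, q.2.2.2.2.1, q.2.2.2.2.2)).2.1,
          (T (q.2.2.1, q.2.2.2.2.1, q.2.2.2.2.2)).2.2) := by
      funext ⟨a, b, c, d, e, f⟩; rfl
    rw [heq]
    exact (hq1.prodMk
      (hq2.prodMk
        (((pr1 (E := E)).hasFDerivAt.comp _ hg).prodMk
          (hq4.prodMk
            (((pr21 (E := E)).hasFDerivAt.comp _ hg).prodMk
              ((pr22 (E := E)).hasFDerivAt.comp _ hg))))))
  · funext ⟨a, b, c, d, e, f⟩; rfl

end Aux

theorem stmt_15 {E : Type*} [NormedAddCommGroup E] [NormedSpace ℝ E]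
    (T : E × E × E → E × E × E) (hT : IsTetrahedronMap T) (p : E)
    (hdiff : DifferentiableAt ℝ T (p, p, p)) (hfix : T (p, p, p) = (p, p, p)) :
    IsTetrahedronMap (⇑(fderiv ℝ T (p, p, p))) := by

  set L := fderiv ℝ T (p, p, p) with hL
  have hT' : HasFDerivAt T L (p, p, p) := hdiff.hasFDerivAt
  obtain ⟨M1, h1, e1⟩ := exists123 (x := p) (y := p) (z := p) (r := p) (s := p) (t := p) hT'
  obtain ⟨M2, h2, e2⟩ := exists145 (x := p) (y := p) (z := p) (r := p) (s := p) (t := p) hT'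
  obtain ⟨M3, h3, e3⟩ := exists246 (x := p) (y := p) (z := p) (r := p) (s := p) (t := p) hT'
  obtain ⟨M4, h4, e4⟩ := exists356 (x := p) (y := p) (z := p) (r := p) (s := p) (t := p) hT'
  have f1 : tetra123 T (p, p, p, p, p, p) = (p, p, p, p, p, p) := by
    simp [tetra123, hfix]
  have f2 : tetra145 T (p, p, p, p, p, p) = (p, p, p, p, p, p) := by
    simp [tetra145, hfix]
  have f3 : tetra246 T (p, p, p, p, p, p) = (p, p, p, p, p, p) := by
    simp [tetra246, hfix]
  have f4 : tetra356 T (p, p, p, p, p, p) = (p, p, p, p, p, p) := by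
    simp [tetra356, hfix]
  have hLHS : HasFDerivAt (tetra123 T ∘ tetra145 T ∘ tetra246 T ∘ tetra356 T)
      (M1.comp (M2.comp (M3.comp M4))) (p, p, p, p, p, p) := by
    have h3' : HasFDerivAt (tetra246 T) M3 (tetra356 T (p, p, p, p, p, p)) := by
      rw [f4]; exact h3
    have c1 : HasFDerivAt (tetra246 T ∘ tetra356 T) (M3.comp M4) (p, p, p, p, p, p) :=
      HasFDerivAt.comp _ h3' h4
    have c2 : HasFDerivAt (tetra145 T ∘ tetra246 T ∘ tetra356 T)
        (M2.comp (M3.comp M4)) (p, p, p, p, p, p) := by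
      have : (tetra246 T ∘ tetra356 T) (p, p, p, p, p, p) = (p, p, p, p, p, p) := by
        simp [Function.comp, f3, f4]
      have h2' : HasFDerivAt (tetra145 T) M2 ((tetra246 T ∘ tetra356 T) (p, p, p, p, p, p)) := by
        rw [this]; exact h2
      exact HasFDerivAt.comp _ h2' c1
    have : (tetra145 T ∘ tetra246 T ∘ tetra356 T) (p, p, p, p, p, p) = (p, p, p, p, p, p) := by
      simp [Function.comp, f2, f3, f4]
    have h1' : HasFDerivAt (tetra123 T) M1
        ((tetra145 T ∘ tetra246 T ∘ tetra356 T) (p, p, p, p, p, p)) := by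
      rw [this]; exact h1
    exact HasFDerivAt.comp _ h1' c2
  have hRHS : HasFDerivAt (tetra356 T ∘ tetra246 T ∘ tetra145 T ∘ tetra123 T)
      (M4.comp (M3.comp (M2.comp M1))) (p, p, p, p, p, p) := by
    have h2'' : HasFDerivAt (tetra145 T) M2 (tetra123 T (p, p, p, p, p, p)) := by
      rw [f1]; exact h2
    have c1 : HasFDerivAt (tetra145 T ∘ tetra123 T) (M2.comp M1) (p, p, p, p, p, p) :=
      HasFDerivAt.comp _ h2'' h1
    have c2 : HasFDerivAt (tetra246 T ∘ tetra145 T ∘ tetra123 T)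
        (M3.comp (M2.comp M1)) (p, p, p, p, p, p) := by
      have : (tetra145 T ∘ tetra123 T) (p, p, p, p, p, p) = (p, p, p, p, p, p) := by
        simp [Function.comp, f1, f2]
      have h3'' : HasFDerivAt (tetra246 T) M3 ((tetra145 T ∘ tetra123 T) (p, p, p, p, p, p)) := by
        rw [this]; exact h3
      exact HasFDerivAt.comp _ h3'' c1
    have : (tetra246 T ∘ tetra145 T ∘ tetra123 T) (p, p, p, p, p, p) = (p, p, p, p, p, p) := by
      simp [Function.comp, f1, f2, f3]
    have h4'' : HasFDerivAt (tetra356 T) M4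
        ((tetra246 T ∘ tetra145 T ∘ tetra123 T) (p, p, p, p, p, p)) := by
      rw [this]; exact h4
    exact HasFDerivAt.comp _ h4'' c2
  have hMeq : M1.comp (M2.comp (M3.comp M4)) = M4.comp (M3.comp (M2.comp M1)) := by
    have := hT ▸ hLHS
    exact this.unique hRHS
  have := congrArg (fun M : (E × E × E × E × E × E) →L[ℝ] (E × E × E × E × E × E) => ⇑M) hMeq
  simpa [ContinuousLinearMap.coe_comp, e1, e2, e3, e4, IsTetrahedronMap] using this
end
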